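/- With û₀ Schwartz (rapid decay of û₀, ∂û₀/∂k, ∂û₀/∂l) and ṽ(k,ω) = (i|ω|/2π)𝟙_{|ω|≥|k|}û₀(k,√(ω²−k²)), there is a constant C such that ∫_{−∞}^{∞} |ṽ(k,ω) − ṽ(k',ω)| dω ≤ C|k−k'|/(1+k²) whenever k·k' ≥ 0 and |k| ≤ |k'| ≤ |k| + 1. -/

import Mathlib

/-!
Both terms vanish for `|ω| < |k|`. On the annulus `|k| ≤ |ω| ≤ |k'|`, of measure
`2 |k - k'|`, each term is `O(1 / (1 + k²))` by the decay of `û₀`. For `|ω| > |k'|` the points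
`(k, √(ω² - k²))` and `(k', √(ω² - k'²))` lie on the circle of radius `|ω|` in a common closed
quadrant, so the chord between them stays at distance `≥ |ω| / √2` from the origin, and the
mean value theorem bounds the difference by a multiple of
`|ω| (1 + ω²)⁻³ (|k - k'| + (k'² - k²) / √(ω² - k²))`. The singular factor is integrable:
up to the weight it is the derivative of `ω ↦ arctan √(ω² - k²)`, whose total increase is
`π / 2`. Since the integrand is even in `ω`, it suffices to integrate over `ω > 0`.
-/

open MeasureTheory

noncomputable def vtil (u₀ : ℝ × ℝ → ℂ) (k ω : ℝ) : ℂ :=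
  (Complex.I * |ω| / (2 * Real.pi)) *
    (if |k| ≤ |ω| then u₀ (k, Real.sqrt (ω ^ 2 - k ^ 2)) else 0)

open Set Filter Real
open scoped SchwartzMap Topology

theorem SchwartzMap.exists_one_add_sq_pow_mul_norm_le {F : Type*} [NormedAddCommGroup F]
    [NormedSpace ℝ F] (f : 𝓢(ℝ × ℝ, F)) (N : ℕ) :
    ∃ M, ∀ x : ℝ × ℝ, (1 + x.1 ^ 2 + x.2 ^ 2) ^ N * ‖f x‖ ≤ M := by
  refine ⟨2 ^ N * (2 ^ (2 * N) *
    (Finset.Iic (2 * N, 0)).sup (fun m => SchwartzMap.seminorm ℝ m.1 m.2) f), fun x => ?_⟩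
  have hf := one_add_le_sup_seminorm_apply (𝕜 := ℝ) (m := (2 * N, 0)) le_rfl le_rfl f x
  rw [norm_iteratedFDeriv_zero] at hf
  have h1 : x.1 ^ 2 ≤ ‖x‖ ^ 2 := by
    rw [← sq_abs]; exact pow_le_pow_left₀ (abs_nonneg _) (norm_fst_le x) 2
  have h2 : x.2 ^ 2 ≤ ‖x‖ ^ 2 := by
    rw [← sq_abs]; exact pow_le_pow_left₀ (abs_nonneg _) (norm_snd_le x) 2
  have hx : 1 + x.1 ^ 2 + x.2 ^ 2 ≤ 2 * (1 + ‖x‖) ^ 2 := by nlinarith [norm_nonneg x]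
  calc (1 + x.1 ^ 2 + x.2 ^ 2) ^ N * ‖f x‖
      ≤ (2 * (1 + ‖x‖) ^ 2) ^ N * ‖f x‖ := by gcongr
    _ = 2 ^ N * ((1 + ‖x‖) ^ (2 * N) * ‖f x‖) := by rw [mul_pow, ← pow_mul]; ring
    _ ≤ _ := by gcongr

theorem abs_sub_abs_eq_abs_sub_of_mul_nonneg {α : Type*} [CommRing α] [LinearOrder α]
    [IsStrictOrderedRing α] {a b : α} (hab : 0 ≤ a * b) (h : |a| ≤ |b|) :
    |b| - |a| = |a - b| := by
  rw [← abs_of_nonneg (sub_nonneg.2 h), ← sq_eq_sq_iff_abs_eq_abs]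
  have hmul : |a| * |b| = a * b := by rw [← abs_mul, abs_of_nonneg hab]
  linear_combination (sq_abs b) + (sq_abs a) - 2 * hmul

theorem sq_sub_sq_le_of_abs_le_abs_add_one {α : Type*} [CommRing α] [LinearOrder α]
    [IsStrictOrderedRing α] {a b : α} (hab : 0 ≤ a * b) (h : |a| ≤ |b|)
    (h1 : |b| ≤ |a| + 1) : b ^ 2 - a ^ 2 ≤ 2 * (1 + a ^ 2) * |a - b| := by
  have hfac : b ^ 2 - a ^ 2 = (|b| + |a|) * |a - b| := by
    rw [← abs_sub_abs_eq_abs_sub_of_mul_nonneg hab h, ← sq_abs a, ← sq_abs b]; ring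
  rw [hfac]
  gcongr
  nlinarith [sq_abs a, sq_nonneg (|a| - 1)]

theorem Real.sqrt_sub_sqrt_le_div {x y : ℝ} (hy : 0 ≤ y) (hyx : y ≤ x) (hx : 0 < x) :
    √x - √y ≤ (x - y) / √x := by
  have hsx : 0 < √x := sqrt_pos.mpr hx
  rw [le_div_iff₀ hsx, sub_mul, mul_self_sqrt hx.le]
  nlinarith [sq_sqrt hy, sqrt_le_sqrt hyx, sqrt_nonneg y]

theorem half_sq_le_of_mem_segment {a b p : ℝ × ℝ} {r : ℝ} (ha : a.1 ^ 2 + a.2 ^ 2 = r ^ 2)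
    (hb : b.1 ^ 2 + b.2 ^ 2 = r ^ 2) (hab : 0 ≤ a.1 * b.1 + a.2 * b.2)
    (hp : p ∈ segment ℝ a b) : r ^ 2 / 2 ≤ p.1 ^ 2 + p.2 ^ 2 := by
  obtain ⟨s, t, hs, ht, hst, rfl⟩ := hp
  have hexp : (s • a + t • b).1 ^ 2 + (s • a + t • b).2 ^ 2
      = (s ^ 2 + t ^ 2) * r ^ 2 + 2 * s * t * (a.1 * b.1 + a.2 * b.2) := by
    simp only [Prod.fst_add, Prod.snd_add, Prod.smul_fst, Prod.smul_snd, smul_eq_mul]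
    linear_combination s ^ 2 * ha + t ^ 2 * hb
  have hst2 : 1 / 2 ≤ s ^ 2 + t ^ 2 := by nlinarith [sq_nonneg (s - t)]
  rw [hexp]
  nlinarith [mul_nonneg (mul_nonneg hs ht) hab, mul_le_mul_of_nonneg_right hst2 (sq_nonneg r)]

theorem norm_mk_sqrt_sub_mk_sqrt_le {k k' ω : ℝ} (hkk' : 0 ≤ k * k') (hle : |k| ≤ |k'|)
    (hle1 : |k'| ≤ |k| + 1) (hω : k' ^ 2 < ω ^ 2) :
    ‖((k, √(ω ^ 2 - k ^ 2)) : ℝ × ℝ) - (k', √(ω ^ 2 - k' ^ 2))‖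
      ≤ |k - k'| + 2 * (1 + k ^ 2) * |k - k'| / √(ω ^ 2 - k ^ 2) := by
  have hk : k ^ 2 ≤ k' ^ 2 := sq_le_sq.2 hle
  have hL'L : √(ω ^ 2 - k' ^ 2) ≤ √(ω ^ 2 - k ^ 2) := sqrt_le_sqrt (by linarith)
  have hLL' : √(ω ^ 2 - k ^ 2) - √(ω ^ 2 - k' ^ 2)
      ≤ 2 * (1 + k ^ 2) * |k - k'| / √(ω ^ 2 - k ^ 2) := by
    calc √(ω ^ 2 - k ^ 2) - √(ω ^ 2 - k' ^ 2)
        ≤ ((ω ^ 2 - k ^ 2) - (ω ^ 2 - k' ^ 2)) / √(ω ^ 2 - k ^ 2) :=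
          sqrt_sub_sqrt_le_div (by linarith) (by linarith) (by linarith)
      _ = (k' ^ 2 - k ^ 2) / √(ω ^ 2 - k ^ 2) := by ring_nf
      _ ≤ 2 * (1 + k ^ 2) * |k - k'| / √(ω ^ 2 - k ^ 2) := by
          gcongr; exact sq_sub_sq_le_of_abs_le_abs_add_one hkk' hle hle1
  rw [Prod.mk_sub_mk, Prod.norm_def, Real.norm_eq_abs, Real.norm_eq_abs,
    abs_of_nonneg (sub_nonneg.2 hL'L)]
  exact max_le (le_add_of_nonneg_right (by positivity))
    (hLL'.trans (le_add_of_nonneg_left (abs_nonneg _)))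

theorem norm_sub_le_of_fderiv_decay {F : Type*} [NormedAddCommGroup F]
    [NormedSpace ℝ F] {u : ℝ × ℝ → F} {M : ℝ} (hu : Differentiable ℝ u)
    (hDu : ∀ x : ℝ × ℝ, (1 + x.1 ^ 2 + x.2 ^ 2) ^ 3 * ‖fderiv ℝ u x‖ ≤ M)
    {a b : ℝ × ℝ} {r : ℝ} (ha : a.1 ^ 2 + a.2 ^ 2 = r ^ 2) (hb : b.1 ^ 2 + b.2 ^ 2 = r ^ 2)
    (hab : 0 ≤ a.1 * b.1 + a.2 * b.2) :
    ‖u a - u b‖ ≤ 8 * M / (1 + r ^ 2) ^ 3 * ‖a - b‖ := by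
  have hbound : ∀ p ∈ segment ℝ a b, ‖fderiv ℝ u p‖ ≤ 8 * M / (1 + r ^ 2) ^ 3 := by
    intro p hp
    have hp2 := half_sq_le_of_mem_segment ha hb hab hp
    have hr : (1 + r ^ 2) ^ 3 ≤ 8 * (1 + p.1 ^ 2 + p.2 ^ 2) ^ 3 := by
      calc (1 + r ^ 2) ^ 3 ≤ (2 * (1 + p.1 ^ 2 + p.2 ^ 2)) ^ 3 := by gcongr; linarith
        _ = 8 * (1 + p.1 ^ 2 + p.2 ^ 2) ^ 3 := by ring
    rw [le_div_iff₀ (by positivity)]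
    calc ‖fderiv ℝ u p‖ * (1 + r ^ 2) ^ 3
        ≤ ‖fderiv ℝ u p‖ * (8 * (1 + p.1 ^ 2 + p.2 ^ 2) ^ 3) := by gcongr
      _ = 8 * ((1 + p.1 ^ 2 + p.2 ^ 2) ^ 3 * ‖fderiv ℝ u p‖) := by ring
      _ ≤ 8 * M := by gcongr; exact hDu p
  rw [norm_sub_rev, norm_sub_rev a]
  exact (convex_segment a b).norm_image_sub_le_of_norm_fderiv_le (fun p _ => hu p) hbound
    (left_mem_segment ℝ a b) (right_mem_segment ℝ a b)

noncomputable def arctanSqrtDeriv (k ω : ℝ) : ℝ :=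
  ω / (√(ω ^ 2 - k ^ 2) * (1 + (ω ^ 2 - k ^ 2)))

section arctanSqrt

variable {k ω : ℝ}

theorem hasDerivAt_arctan_sqrt_sq_sub_sq (h : |k| < ω) :
    HasDerivAt (fun x => arctan √(x ^ 2 - k ^ 2)) (arctanSqrtDeriv k ω) ω := by
  have hpos : 0 < ω ^ 2 - k ^ 2 := by nlinarith [sq_abs k, abs_nonneg k]
  have hsq : HasDerivAt (fun x : ℝ => x ^ 2 - k ^ 2) (2 * ω) ω := by
    simpa using (hasDerivAt_pow 2 ω).sub_const (k ^ 2)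
  refine ((hasDerivAt_arctan _).comp ω ((hasDerivAt_sqrt hpos.ne').comp ω hsq)).congr_deriv ?_
  have hs : 0 < √(ω ^ 2 - k ^ 2) := sqrt_pos.mpr hpos
  rw [arctanSqrtDeriv, Function.comp_apply, sq_sqrt hpos.le]
  field_simp

theorem arctanSqrtDeriv_pos (h : |k| < ω) : 0 < arctanSqrtDeriv k ω := by
  have hpos : 0 < ω ^ 2 - k ^ 2 := by nlinarith [sq_abs k, abs_nonneg k]
  have hω : 0 < ω := (abs_nonneg k).trans_lt h
  unfold arctanSqrtDeriv
  have := sqrt_pos.mpr hpos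
  positivity

theorem tendsto_arctan_sqrt_sq_sub_sq (k : ℝ) :
    Tendsto (fun x => arctan √(x ^ 2 - k ^ 2)) atTop (𝓝 (π / 2)) := by
  have hsq : Tendsto (fun x : ℝ => x ^ 2 - k ^ 2) atTop atTop :=
    tendsto_atTop_add_const_right _ _ (tendsto_pow_atTop two_ne_zero)
  exact (tendsto_arctan_atTop.mono_right nhdsWithin_le_nhds).comp (tendsto_sqrt_atTop.comp hsq)

theorem div_one_add_sq_pow_three_mul_le_arctanSqrtDeriv (h : |k| < ω) :
    ω / (1 + ω ^ 2) ^ 3 * (1 + 2 * (1 + k ^ 2) / √(ω ^ 2 - k ^ 2))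
      ≤ 3 / (1 + k ^ 2) * arctanSqrtDeriv k ω := by
  have hω : 0 < ω := (abs_nonneg k).trans_lt h
  have hpos : 0 < ω ^ 2 - k ^ 2 := by nlinarith [sq_abs k, abs_nonneg k]
  set L := √(ω ^ 2 - k ^ 2)
  have hL : L ^ 2 = ω ^ 2 - k ^ 2 := sq_sqrt hpos.le
  have hL0 : 0 < L := sqrt_pos.2 hpos
  have h1 : L + 2 * (1 + k ^ 2) ≤ 3 * (1 + ω ^ 2) := by nlinarith [sq_nonneg (L - 1)]
  have h2 : (1 + k ^ 2) * (1 + L ^ 2) ≤ (1 + ω ^ 2) * (1 + ω ^ 2) :=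
    mul_le_mul (by nlinarith) (by nlinarith) (by positivity) (by positivity)
  have hkey : (L + 2 * (1 + k ^ 2)) * ((1 + k ^ 2) * (1 + L ^ 2)) ≤ 3 * (1 + ω ^ 2) ^ 3 := by
    calc _ ≤ 3 * (1 + ω ^ 2) * ((1 + ω ^ 2) * (1 + ω ^ 2)) := by gcongr
      _ = 3 * (1 + ω ^ 2) ^ 3 := by ring
  have hlhs : ω / (1 + ω ^ 2) ^ 3 * (1 + 2 * (1 + k ^ 2) / L)
      = ω * (L + 2 * (1 + k ^ 2)) / ((1 + ω ^ 2) ^ 3 * L) := by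
    field_simp
  have hrhs : 3 / (1 + k ^ 2) * arctanSqrtDeriv k ω
      = 3 * ω / ((1 + k ^ 2) * (L * (1 + L ^ 2))) := by
    rw [arctanSqrtDeriv, div_mul_div_comm, hL]
  rw [hlhs, hrhs, div_le_div_iff₀ (by positivity) (by positivity)]
  nlinarith [mul_le_mul_of_nonneg_left hkey (mul_pos hω hL0).le]

variable (k) in
theorem integrableOn_arctanSqrtDeriv : IntegrableOn (arctanSqrtDeriv k) (Ioi |k|) :=
  integrableOn_Ioi_deriv_of_nonneg (by fun_prop) (fun _ hx => hasDerivAt_arctan_sqrt_sq_sub_sq hx)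
    (fun _ hx => (arctanSqrtDeriv_pos hx).le) (tendsto_arctan_sqrt_sq_sub_sq k)

variable (k) in
theorem integral_arctanSqrtDeriv : ∫ ω in Ioi |k|, arctanSqrtDeriv k ω = π / 2 := by
  rw [integral_Ioi_of_hasDerivAt_of_nonneg (by fun_prop)
    (fun _ hx => hasDerivAt_arctan_sqrt_sq_sub_sq hx) (fun _ hx => (arctanSqrtDeriv_pos hx).le)
    (tendsto_arctan_sqrt_sq_sub_sq k)]
  simp

end arctanSqrt

section vtil

variable {u : ℝ × ℝ → ℂ} {M k k' ω : ℝ}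

theorem vtil_abs : vtil u k |ω| = vtil u k ω := by
  simp [vtil, sq_abs]

theorem vtil_eq_zero_of_abs_lt (h : |ω| < |k|) : vtil u k ω = 0 := by
  rw [vtil, if_neg h.not_ge, mul_zero]

theorem norm_vtil_prefactor_le (ω : ℝ) : ‖(Complex.I * |ω| / (2 * π) : ℂ)‖ ≤ |ω| := by
  rw [norm_div, norm_mul, Complex.norm_I, one_mul, Complex.norm_real, Real.norm_eq_abs, abs_abs]
  exact div_le_self (abs_nonneg ω) (by simp [abs_of_pos pi_pos]; linarith [pi_gt_three])

theorem norm_vtil_le (hu : ∀ x : ℝ × ℝ, (1 + x.1 ^ 2 + x.2 ^ 2) ^ 3 * ‖u x‖ ≤ M) (k ω : ℝ) :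
    ‖vtil u k ω‖ ≤ M / (1 + k ^ 2) := by
  have hM : 0 ≤ M := (by positivity : (0 : ℝ) ≤ _).trans (hu 0)
  rw [vtil]
  split_ifs with h
  · have hL : √(ω ^ 2 - k ^ 2) ^ 2 = ω ^ 2 - k ^ 2 :=
      sq_sqrt (by nlinarith [sq_abs k, sq_abs ω, abs_nonneg k])
    have huL := hu (k, √(ω ^ 2 - k ^ 2))
    simp only [hL, show 1 + k ^ 2 + (ω ^ 2 - k ^ 2) = 1 + ω ^ 2 by ring] at huL
    have hω : |ω| * (1 + k ^ 2) ≤ (1 + ω ^ 2) ^ 3 := by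
      have h1 : |ω| ≤ 1 + ω ^ 2 := by nlinarith [sq_abs ω, sq_nonneg (|ω| - 1)]
      have h2 : 1 + k ^ 2 ≤ 1 + ω ^ 2 := by linarith [sq_le_sq.2 h]
      calc |ω| * (1 + k ^ 2) ≤ (1 + ω ^ 2) * (1 + ω ^ 2) := by gcongr
        _ ≤ (1 + ω ^ 2) ^ 3 := by nlinarith [sq_nonneg ω]
    rw [norm_mul, le_div_iff₀ (by positivity)]
    calc ‖(Complex.I * |ω| / (2 * π) : ℂ)‖ * ‖u (k, √(ω ^ 2 - k ^ 2))‖ * (1 + k ^ 2)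
        ≤ |ω| * ‖u (k, √(ω ^ 2 - k ^ 2))‖ * (1 + k ^ 2) := by
          gcongr; exact norm_vtil_prefactor_le ω
      _ ≤ (1 + ω ^ 2) ^ 3 * ‖u (k, √(ω ^ 2 - k ^ 2))‖ := by
          nlinarith [norm_nonneg (u (k, √(ω ^ 2 - k ^ 2)))]
      _ ≤ M := huL
  · simp only [mul_zero, norm_zero]
    positivity

theorem vtil_sub_vtil_of_abs_le (hle : |k| ≤ |k'|) (hk'ω : |k'| ≤ |ω|) :
    vtil u k ω - vtil u k' ω
      = (Complex.I * |ω| / (2 * π)) * (u (k, √(ω ^ 2 - k ^ 2)) - u (k', √(ω ^ 2 - k' ^ 2))) := by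
  rw [vtil, vtil, if_pos (hle.trans hk'ω), if_pos hk'ω, mul_sub]

theorem norm_vtil_sub_vtil_le_of_lt (hu : Differentiable ℝ u)
    (hDu : ∀ x : ℝ × ℝ, (1 + x.1 ^ 2 + x.2 ^ 2) ^ 3 * ‖fderiv ℝ u x‖ ≤ M)
    (hkk' : 0 ≤ k * k') (hle : |k| ≤ |k'|) (hle1 : |k'| ≤ |k| + 1) (hω : |k'| < ω) :
    ‖vtil u k ω - vtil u k' ω‖ ≤ 24 * M * |k - k'| / (1 + k ^ 2) * arctanSqrtDeriv k ω := by
  have hM : 0 ≤ M := (by positivity : (0 : ℝ) ≤ _).trans (hDu 0)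
  have hω0 : 0 < ω := (abs_nonneg _).trans_lt hω
  have hk : k ^ 2 ≤ k' ^ 2 := sq_le_sq.2 hle
  have hk' : k' ^ 2 < ω ^ 2 := sq_lt_sq.2 (by rwa [abs_of_pos hω0])
  set d := |k - k'|
  set L := √(ω ^ 2 - k ^ 2)
  set L' := √(ω ^ 2 - k' ^ 2)
  have hL : L ^ 2 = ω ^ 2 - k ^ 2 := sq_sqrt (by linarith)
  have hdist := norm_mk_sqrt_sub_mk_sqrt_le hkk' hle hle1 hk'
  have hlip := norm_sub_le_of_fderiv_decay hu hDu (a := (k, L)) (b := (k', L'))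
    (r := ω) (by simp only; linarith) (by simp only [L']; rw [sq_sqrt (by linarith)]; ring)
    (add_nonneg hkk' (mul_nonneg (sqrt_nonneg _) (sqrt_nonneg _)))
  calc ‖vtil u k ω - vtil u k' ω‖
      ≤ ω * (8 * M / (1 + ω ^ 2) ^ 3 * (d + 2 * (1 + k ^ 2) * d / L)) := by
        rw [vtil_sub_vtil_of_abs_le hle (by rw [abs_of_pos hω0]; exact hω.le), norm_mul]
        refine mul_le_mul ((norm_vtil_prefactor_le ω).trans_eq (abs_of_pos hω0)) ?_
          (norm_nonneg _) hω0.le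
        exact hlip.trans (by gcongr)
    _ = 8 * M * d * (ω / (1 + ω ^ 2) ^ 3 * (1 + 2 * (1 + k ^ 2) / L)) := by ring
    _ ≤ 8 * M * d * (3 / (1 + k ^ 2) * arctanSqrtDeriv k ω) :=
        mul_le_mul_of_nonneg_left
          (div_one_add_sq_pow_three_mul_le_arctanSqrtDeriv (hle.trans_lt hω)) (by positivity)
    _ = 24 * M * d / (1 + k ^ 2) * arctanSqrtDeriv k ω := by ring

end vtil

noncomputable def vtilSubMajorant (M k k' ω : ℝ) : ℝ :=
  (Icc |k| |k'|).indicator (fun _ => 2 * M / (1 + k ^ 2)) ω +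
    (Ioi |k'|).indicator (fun ω => 24 * M * |k - k'| / (1 + k ^ 2) * arctanSqrtDeriv k ω) ω

section vtilSubMajorant

variable {M k k' : ℝ}

theorem vtilSubMajorant_nonneg (hM : 0 ≤ M) (hle : |k| ≤ |k'|) (ω : ℝ) :
    0 ≤ vtilSubMajorant M k k' ω := by
  refine add_nonneg (indicator_nonneg (fun _ _ => by positivity) ω)
    (indicator_nonneg (fun ω hω => ?_) ω)
  have := arctanSqrtDeriv_pos (hle.trans_lt hω)
  positivity

theorem norm_vtil_sub_vtil_le_vtilSubMajorant {u : ℝ × ℝ → ℂ} (hu : Differentiable ℝ u)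
    (hu₀ : ∀ x : ℝ × ℝ, (1 + x.1 ^ 2 + x.2 ^ 2) ^ 3 * ‖u x‖ ≤ M)
    (hDu : ∀ x : ℝ × ℝ, (1 + x.1 ^ 2 + x.2 ^ 2) ^ 3 * ‖fderiv ℝ u x‖ ≤ M)
    (hkk' : 0 ≤ k * k') (hle : |k| ≤ |k'|) (hle1 : |k'| ≤ |k| + 1) {ω : ℝ} (hω : 0 ≤ ω) :
    ‖vtil u k ω - vtil u k' ω‖ ≤ vtilSubMajorant M k k' ω := by
  have hM : 0 ≤ M := (by positivity : (0 : ℝ) ≤ _).trans (hu₀ 0)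
  have hmaj := vtilSubMajorant_nonneg hM hle ω
  rcases lt_or_ge ω |k| with hωk | hωk
  · have hωk : |ω| < |k| := by rwa [abs_of_nonneg hω]
    rw [vtil_eq_zero_of_abs_lt hωk, vtil_eq_zero_of_abs_lt (hωk.trans_le hle), sub_zero,
      norm_zero]
    exact hmaj
  rcases le_or_gt ω |k'| with hωk' | hωk'
  · have hk' : M / (1 + k' ^ 2) ≤ M / (1 + k ^ 2) :=
      div_le_div_of_nonneg_left hM (by positivity) (by linarith [sq_le_sq.2 hle])
    calc ‖vtil u k ω - vtil u k' ω‖ ≤ ‖vtil u k ω‖ + ‖vtil u k' ω‖ := norm_sub_le _ _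
      _ ≤ M / (1 + k ^ 2) + M / (1 + k ^ 2) :=
          add_le_add (norm_vtil_le hu₀ k ω) ((norm_vtil_le hu₀ k' ω).trans hk')
      _ = 2 * M / (1 + k ^ 2) := by ring
      _ = vtilSubMajorant M k k' ω := by
        rw [vtilSubMajorant, indicator_of_mem (mem_Icc.2 ⟨hωk, hωk'⟩),
          indicator_of_notMem (notMem_Ioi.2 hωk'), add_zero]
  · rw [vtilSubMajorant, indicator_of_notMem (fun h => hωk'.not_ge h.2),
      indicator_of_mem (mem_Ioi.2 hωk'), zero_add]
    exact norm_vtil_sub_vtil_le_of_lt hu hDu hkk' hle hle1 hωk'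

theorem integrableOn_Ioi_arctanSqrtDeriv (hle : |k| ≤ |k'|) :
    IntegrableOn (arctanSqrtDeriv k) (Ioi |k'|) :=
  (integrableOn_arctanSqrtDeriv k).mono_set (Ioi_subset_Ioi hle)

theorem integrable_vtilSubMajorant (hle : |k| ≤ |k'|) :
    Integrable (vtilSubMajorant M k k') :=
  ((integrable_indicator_iff measurableSet_Icc).2 (integrableOn_const measure_Icc_lt_top.ne)).add
    ((integrable_indicator_iff measurableSet_Ioi).2
      ((integrableOn_Ioi_arctanSqrtDeriv hle).const_mul _))

theorem integral_vtilSubMajorant_le (hM : 0 ≤ M) (hle : |k| ≤ |k'|) :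
    ∫ ω, vtilSubMajorant M k k' ω
      ≤ 2 * M / (1 + k ^ 2) * (|k'| - |k|) + 24 * M * |k - k'| / (1 + k ^ 2) * (π / 2) := by
  have hIoi : ∫ ω in Ioi |k'|, arctanSqrtDeriv k ω ≤ π / 2 := by
    rw [← integral_arctanSqrtDeriv k]
    exact setIntegral_mono_set (integrableOn_arctanSqrtDeriv k)
      ((ae_restrict_iff' measurableSet_Ioi).2
        (.of_forall fun _ hω => (arctanSqrtDeriv_pos hω).le))
      (Ioi_subset_Ioi hle).eventuallyLE
  unfold vtilSubMajorant
  rw [integral_add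
      ((integrable_indicator_iff measurableSet_Icc).2 (integrableOn_const measure_Icc_lt_top.ne))
      ((integrable_indicator_iff measurableSet_Ioi).2
        ((integrableOn_Ioi_arctanSqrtDeriv hle).const_mul _)),
    integral_indicator_const _ measurableSet_Icc, integral_indicator measurableSet_Ioi,
    integral_const_mul, Real.volume_real_Icc_of_le hle, smul_eq_mul, mul_comm (|k'| - |k|)]
  gcongr

end vtilSubMajorant

theorem integral_norm_vtil_sub_vtil_le {u : ℝ × ℝ → ℂ} {M k k' : ℝ} (hu : Differentiable ℝ u)
    (hu₀ : ∀ x : ℝ × ℝ, (1 + x.1 ^ 2 + x.2 ^ 2) ^ 3 * ‖u x‖ ≤ M)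
    (hDu : ∀ x : ℝ × ℝ, (1 + x.1 ^ 2 + x.2 ^ 2) ^ 3 * ‖fderiv ℝ u x‖ ≤ M)
    (hkk' : 0 ≤ k * k') (hle : |k| ≤ |k'|) (hle1 : |k'| ≤ |k| + 1) :
    ∫ ω, ‖vtil u k ω - vtil u k' ω‖ ≤ (4 + 24 * π) * M * |k - k'| / (1 + k ^ 2) := by
  have hM : 0 ≤ M := (by positivity : (0 : ℝ) ≤ _).trans (hu₀ 0)
  have hmaj : ∫ ω in Ioi 0, ‖vtil u k ω - vtil u k' ω‖ ≤ ∫ ω, vtilSubMajorant M k k' ω :=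
    (integral_mono_of_nonneg (.of_forall fun _ => norm_nonneg _)
      (integrable_vtilSubMajorant hle).integrableOn
      ((ae_restrict_iff' measurableSet_Ioi).2 (.of_forall fun _ hω =>
        norm_vtil_sub_vtil_le_vtilSubMajorant hu hu₀ hDu hkk' hle hle1 (le_of_lt hω)))).trans
    (setIntegral_le_integral (integrable_vtilSubMajorant hle)
      (.of_forall (vtilSubMajorant_nonneg hM hle)))
  calc ∫ ω, ‖vtil u k ω - vtil u k' ω‖
      = 2 * ∫ ω in Ioi 0, ‖vtil u k ω - vtil u k' ω‖ := by
        simpa only [vtil_abs] using integral_comp_abs (f := fun ω => ‖vtil u k ω - vtil u k' ω‖)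
    _ ≤ 2 * (2 * M / (1 + k ^ 2) * (|k'| - |k|) + 24 * M * |k - k'| / (1 + k ^ 2) * (π / 2)) := by
        gcongr; exact hmaj.trans (integral_vtilSubMajorant_le hM hle)
    _ = (4 + 24 * π) * M * |k - k'| / (1 + k ^ 2) := by
        rw [abs_sub_abs_eq_abs_sub_of_mul_nonneg hkk' hle]; ring

theorem vtil_lipschitz_bound (u₀ : SchwartzMap (ℝ × ℝ) ℂ) :
    ∃ C : ℝ, ∀ k k' : ℝ, 0 ≤ k * k' → |k| ≤ |k'| → |k'| ≤ |k| + 1 →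
      ∫ ω : ℝ, ‖vtil (fun p => u₀ p) k ω - vtil (fun p => u₀ p) k' ω‖
        ≤ C * |k - k'| / (1 + k ^ 2) := by
  obtain ⟨M₀, hM₀⟩ := u₀.exists_one_add_sq_pow_mul_norm_le 3
  obtain ⟨M₁, hM₁⟩ := (SchwartzMap.fderivCLM ℝ (ℝ × ℝ) ℂ u₀).exists_one_add_sq_pow_mul_norm_le 3
  exact ⟨(4 + 24 * π) * max M₀ M₁, fun k k' hkk' hle hle1 =>
    integral_norm_vtil_sub_vtil_le u₀.differentiable
      (fun x => (hM₀ x).trans (le_max_left _ _)) (fun x => (hM₁ x).trans (le_max_right _ _))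
      hkk' hle hle1⟩
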